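/- (Lemma 4.4, existence of a separating projection direction in the plane) Let n ≥ 2 and let w_1, …, w_n ∈ ℝ² with d_min := min_{p≠j} ‖w_p − w_j‖₂. For q = 1, …, n(n+1)/2 let θ_q := 2πq/(n(n+1)) and let S_q be the one-dimensional subspace of ℝ² spanned by v(θ_q) := (cos θ_q, sin θ_q). Then there exists q* ∈ {1, …, n(n+1)/2} such that min_{p≠j, 1≤p,j≤n} ‖P_{S_{q*}}(w_p) − P_{S_{q*}}(w_j)‖₂ ≥ 2 d_min/(n(n+1)). -/

import Mathlib

/-!
If no direction `θ_q = q π / M`, `M = n(n+1)/2`, separates the projections, every one of the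
`M` directions nearly annihilates the difference `w_p - w_j` of some pair. There are only
`n(n-1)/2 < M` pairs, so two directions `θ_a < θ_b` share a pair. But a vector on which both
`⟪v(θ_a), ·⟫` and `⟪v(θ_b), ·⟫` are small is itself small, by a factor `|sin (θ_b - θ_a)|`,
and Jordan's inequality bounds this sine below by `2 / M` on the grid.
-/

/-- The unit vector `(cos θ, sin θ)` of the plane. -/
noncomputable def dirVec (θ : ℝ) : EuclideanSpace ℝ (Fin 2) :=
  WithLp.toLp 2 fun (i : Fin 2) => if (i : ℕ) = 0 then Real.cos θ else Real.sin θ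

open Real

theorem Submodule.norm_orthogonalProjectionOnto_span_singleton_sub {E : Type*}
    [NormedAddCommGroup E] [InnerProductSpace ℝ E] {u : E} (hu : ‖u‖ = 1) (x y : E) :
    ‖((ℝ ∙ u).orthogonalProjectionOnto x : E) - (ℝ ∙ u).orthogonalProjectionOnto y‖ =
      |inner ℝ u (x - y)| := by
  rw [← starProjection_apply, ← starProjection_apply, ← map_sub,
    starProjection_unit_singleton ℝ hu, norm_smul, hu, mul_one, Real.norm_eq_abs]

theorem Real.two_div_pi_mul_le_sin_of_le_of_le_sub {δ x : ℝ} (hδ : 0 ≤ δ) (hδx : δ ≤ x)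
    (hx : x ≤ π - δ) : 2 / π * δ ≤ sin x := by
  have h2π : 0 ≤ 2 / π := by positivity
  rcases le_total x (π / 2) with h | h
  · exact (mul_le_mul_of_nonneg_left hδx h2π).trans (mul_le_sin (hδ.trans hδx) h)
  · rw [← sin_pi_sub]
    exact (mul_le_mul_of_nonneg_left (by linarith) h2π).trans
      (mul_le_sin (by linarith) (by linarith))

theorem two_div_le_sin_sub_mul_pi_div {M a b : ℕ} (ha : 1 ≤ a) (hab : a < b) (hbM : b ≤ M) :
    2 / M ≤ sin (b * (π / M) - a * (π / M)) := by
  have hM : (0 : ℝ) < M := Nat.cast_pos.mpr (by omega)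
  have hab' : (a : ℝ) + 1 ≤ b := by exact_mod_cast hab
  have ha' : (1 : ℝ) ≤ a := by exact_mod_cast ha
  have hbM' : (b : ℝ) ≤ M := by exact_mod_cast hbM
  have hδ : 0 < π / M := by positivity
  have hπ : M * (π / M) = π := by field_simp
  have hle : (b - a + 1) * (π / M) ≤ M * (π / M) := by gcongr; linarith
  calc (2 : ℝ) / M = 2 / π * (π / M) := by field_simp
    _ ≤ _ := two_div_pi_mul_le_sin_of_le_of_le_sub hδ.le (by nlinarith) (by linarith)

theorem Fintype.exists_lt_common_pair_of_choose_two_lt {ι α : Type*} [Fintype ι] [LinearOrder ι]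
    [Fintype α] (r : ι → α → α → Prop) (hr : ∀ i a b, r i a b → r i b a)
    (hcard : (card α).choose 2 < card ι) (h : ∀ i, ∃ a b, a ≠ b ∧ r i a b) :
    ∃ i i', i < i' ∧ ∃ a b, a ≠ b ∧ r i a b ∧ r i' a b := by
  classical
  choose a b hab hr' using h
  let f : ι → {z : Sym2 α // ¬z.IsDiag} := fun i => ⟨s(a i, b i), by simpa using hab i⟩
  obtain ⟨i, i', hne, hf⟩ :=
    exists_ne_map_eq_of_card_lt f (by rwa [Sym2.card_subtype_not_diag])
  have hi' : r i' (a i) (b i) := by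
    rcases Sym2.eq_iff.mp (congrArg Subtype.val hf) with ⟨ha, hb⟩ | ⟨ha, hb⟩
    · rw [ha, hb]; exact hr' i'
    · rw [ha, hb]; exact hr _ _ _ (hr' i')
  rcases hne.lt_or_gt with hlt | hlt
  · exact ⟨i, i', hlt, a i, b i, hab i, hr' i, hi'⟩
  · exact ⟨i', i, hlt, a i, b i, hab i, hi', hr' i⟩

theorem norm_dirVec (θ : ℝ) : ‖dirVec θ‖ = 1 := by
  simp [EuclideanSpace.norm_eq, dirVec, Fin.sum_univ_two]

theorem inner_dirVec (θ : ℝ) (x : EuclideanSpace ℝ (Fin 2)) :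
    inner ℝ (dirVec θ) x = cos θ * x 0 + sin θ * x 1 := by
  simp [dirVec, PiLp.inner_apply, Fin.sum_univ_two, mul_comm]

/-- Cramer's rule for the linear system `⟪dirVec α, x⟫ = c`, `⟪dirVec β, x⟫ = c'`, whose
determinant is `sin (β - α)`. -/
theorem sin_sub_smul_eq_inner_dirVec_smul_sub (α β : ℝ) (x : EuclideanSpace ℝ (Fin 2)) :
    sin (β - α) • x =
      inner ℝ (dirVec α) x • dirVec (β - π / 2) - inner ℝ (dirVec β) x • dirVec (α - π / 2) := by
  ext i
  fin_cases i <;>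
  · simp only [PiLp.smul_apply, PiLp.sub_apply, inner_dirVec, smul_eq_mul]
    simp only [dirVec, sin_sub, cos_sub, cos_pi_div_two, sin_pi_div_two, Fin.isValue,
      Fin.val_eq_zero_iff, Fin.zero_eta, Fin.mk_one, one_ne_zero, ↓reduceIte]
    ring

theorem abs_sin_sub_mul_norm_le (α β : ℝ) (x : EuclideanSpace ℝ (Fin 2)) :
    |sin (β - α)| * ‖x‖ ≤ |inner ℝ (dirVec α) x| + |inner ℝ (dirVec β) x| := by
  calc |sin (β - α)| * ‖x‖ = ‖sin (β - α) • x‖ := by rw [norm_smul, Real.norm_eq_abs]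
    _ ≤ ‖inner ℝ (dirVec α) x • dirVec (β - π / 2)‖ +
        ‖inner ℝ (dirVec β) x • dirVec (α - π / 2)‖ := by
      rw [sin_sub_smul_eq_inner_dirVec_smul_sub]; exact norm_sub_le _ _
    _ = _ := by simp only [norm_smul, norm_dirVec, mul_one, Real.norm_eq_abs]

theorem separating_projection_direction_in_plane_general
    (n : ℕ) (hn : 2 ≤ n)
    (w : Fin n → EuclideanSpace ℝ (Fin 2)) (dmin : ℝ)
    -- `dmin` is the minimum separation of the `w_j`
    (hdminle : ∀ p j, p ≠ j → dmin ≤ ‖w p - w j‖) :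
    ∃ q : ℕ, 1 ≤ q ∧ 2 * q ≤ n * (n + 1) ∧
      ∀ p j, p ≠ j →
        2 * dmin / ((n : ℝ) * ((n : ℝ) + 1)) ≤
          ‖(Submodule.orthogonalProjection
              (Submodule.span ℝ {dirVec (2 * Real.pi * (q : ℝ) / ((n : ℝ) * ((n : ℝ) + 1)))})
              (w p) :
            EuclideanSpace ℝ (Fin 2)) -
          (Submodule.orthogonalProjection
              (Submodule.span ℝ {dirVec (2 * Real.pi * (q : ℝ) / ((n : ℝ) * ((n : ℝ) + 1)))})
              (w j) :
            EuclideanSpace ℝ (Fin 2))‖ := by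
  set M := (n + 1).choose 2
  have hM : n * (n + 1) = 2 * M := by
    have := Nat.add_one_mul_choose_eq n 1
    rw [Nat.choose_one_right] at this
    linarith
  have hcard : n.choose 2 < M := by
    have : M = n.choose 1 + n.choose 2 := Nat.choose_succ_succ' n 1
    rw [Nat.choose_one_right] at this
    omega
  have hN : (n : ℝ) * (n + 1) = 2 * M := by exact_mod_cast hM
  have hangle (q : ℕ) : 2 * π * q / (2 * M) = q * (π / M) := by field_simp
  simp only [Submodule.norm_orthogonalProjectionOnto_span_singleton_sub (norm_dirVec _), hN,
    hangle, mul_div_mul_left _ (M : ℝ) two_ne_zero]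
  by_contra! hbad
  obtain ⟨i, i', hii', p, j, hpj, hi, hi'⟩ := Fintype.exists_lt_common_pair_of_choose_two_lt
    (fun (i : Fin M) p j => |inner ℝ (dirVec ((i + 1 : ℕ) * (π / M))) (w p - w j)| < dmin / M)
    (fun i p j h => by rwa [← neg_sub, inner_neg_right, abs_neg])
    (by simp only [Fintype.card_fin]; exact hcard)
    (fun i => hbad (i + 1) (by omega) (by omega))
  have hsin := two_div_le_sin_sub_mul_pi_div (Nat.le_add_left 1 i) (by omega) i'.isLt
  have hlt : 2 / M * ‖w p - w j‖ < 2 / M * ‖w p - w j‖ := calc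
    _ ≤ |sin (((i' + 1 : ℕ) : ℝ) * (π / M) - ((i + 1 : ℕ) : ℝ) * (π / M))| * ‖w p - w j‖ := by
      gcongr; exact hsin.trans (le_abs_self _)
    _ ≤ _ := abs_sin_sub_mul_norm_le _ _ _
    _ < dmin / M + dmin / M := add_lt_add hi hi'
    _ ≤ 2 / M * ‖w p - w j‖ := by
      rw [← add_div, div_mul_eq_mul_div, two_mul]
      gcongr <;> exact hdminle p j hpj
  exact hlt.false

/-- Lemma 4.4: existence of a separating projection direction in the plane. -/
theorem separating_projection_direction_in_plane
    (n : ℕ) (hn : 2 ≤ n)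
    (w : Fin n → EuclideanSpace ℝ (Fin 2)) (dmin : ℝ)
    -- `dmin` is the minimum separation of the `w_j`
    (hdminle : ∀ p j, p ≠ j → dmin ≤ ‖w p - w j‖)
    (hdmineq : ∃ p j, p ≠ j ∧ ‖w p - w j‖ = dmin) :
    ∃ q : ℕ, 1 ≤ q ∧ 2 * q ≤ n * (n + 1) ∧
      ∀ p j, p ≠ j →
        2 * dmin / ((n : ℝ) * ((n : ℝ) + 1)) ≤
          ‖(Submodule.orthogonalProjection
              (Submodule.span ℝ {dirVec (2 * Real.pi * (q : ℝ) / ((n : ℝ) * ((n : ℝ) + 1)))})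
              (w p) :
            EuclideanSpace ℝ (Fin 2)) -
          (Submodule.orthogonalProjection
              (Submodule.span ℝ {dirVec (2 * Real.pi * (q : ℝ) / ((n : ℝ) * ((n : ℝ) + 1)))})
              (w j) :
            EuclideanSpace ℝ (Fin 2))‖ :=
  separating_projection_direction_in_plane_general n hn w dmin hdminle
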